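/- arXiv:2308.08280 — 2 statements merged into one kernel-verified Lean document; each statement's English description precedes it below -/
import Mathlib

section
/- Damped wave reformulation: Assume n₁ = n₂, A₁,₁ = 0 and A₁,₂ invertible. Let U be a classical solution of the linear partially dissipative system and define W(x,t) := ∫_{−∞}^{x} U₁(y,t) dy. Then for all (x,t): ∂ₓW(x,t) = U₁(x,t), ∂ₜW(x,t) = −A₁,₂ U₂(x,t), and W solves the extended damped wave equation ∂ₜₜW − A₁,₂A₂,₁ ∂ₓₓW + A₁,₂A₂,₂A₁,₂^{−1} ∂ₜ∂ₓW + A₁,₂ D A₁,₂^{−1} ∂ₜW = 0. -/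
/-!
Because `A₁,₁ = 0` and the first block row of `B` vanishes, the first block row of the system is
`∂ₜU₁ = -A₁,₂ ∂ₓU₂`. Differentiating `W` under the integral sign (dominated by the decay of
`∂ₓU` uniformly on compact time intervals) and integrating `∂ₓU₂` over `(-∞, x]` gives
`∂ₜW = -A₁,₂ U₂`, while `∂ₓW = U₁` is the fundamental theorem of calculus. Substituting
`U₁ = ∂ₓW` and `U₂ = -A₁,₂⁻¹ ∂ₜW` into the second block row
`∂ₜU₂ + A₂,₁ ∂ₓU₁ + A₂,₂ ∂ₓU₂ + D U₂ = 0` and multiplying by `-A₁,₂` yields the damped wave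
equation.
-/

open MeasureTheory Matrix Finset

noncomputable section

/-- Index type for the block decomposition `ℝⁿ = ℝ^{n₁} × ℝ^{n₂}`. -/
abbrev Idx (n₁ n₂ : ℕ) := Fin n₁ ⊕ Fin n₂

/-- The partially dissipative matrix `B = [[0,0],[0,D]]`. -/
def Bmat {n₁ n₂ : ℕ} (D : Matrix (Fin n₂) (Fin n₂) ℝ) :
    Matrix (Idx n₁ n₂) (Idx n₁ n₂) ℝ :=
  Matrix.fromBlocks 0 0 0 D

/-- The Kalman rank condition for the pair `(A,B)`: the only `y ∈ ℝⁿ` with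
`B A^k y = 0` for all `k = 0,…,n−1` is `y = 0`. -/
def KalmanCondition {n₁ n₂ : ℕ} (A B : Matrix (Idx n₁ n₂) (Idx n₁ n₂) ℝ) : Prop :=
  ∀ y : Idx n₁ n₂ → ℝ, (∀ k < n₁ + n₂, (B * A ^ k).mulVec y = 0) → y = 0

/-- Spatial derivative `∂ₓU(t,x)` (time is the first argument). -/
def pdx {E : Type*} [NormedAddCommGroup E] [NormedSpace ℝ E]
    (U : ℝ → ℝ → E) (t x : ℝ) : E :=
  deriv (fun y => U t y) x

/-- A classical solution of `∂ₜU + A ∂ₓU = −BU` on `ℝ × [0,∞)`: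
a smooth function that is Schwartz in `x`, locally uniformly in `t ≥ 0`,
and solves the equation for `t ≥ 0`. -/
structure IsClassicalSolution {n₁ n₂ : ℕ} (A : Matrix (Idx n₁ n₂) (Idx n₁ n₂) ℝ)
    (D : Matrix (Fin n₂) (Fin n₂) ℝ) (U : ℝ → ℝ → Idx n₁ n₂ → ℝ) : Prop where
  smooth : ContDiff ℝ (⊤ : ℕ∞) (fun p : ℝ × ℝ => U p.1 p.2)
  decay : ∀ (k m : ℕ) (T : ℝ), ∃ C : ℝ, ∀ t ∈ Set.Icc (0 : ℝ) T, ∀ x : ℝ,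
      |x| ^ k * ‖iteratedDeriv m (fun y => U t y) x‖ ≤ C
  eqn : ∀ (t x : ℝ), 0 ≤ t →
      deriv (fun s => U s x) t + A.mulVec (pdx U t x) + (Bmat D).mulVec (U t x) = 0

/-- Squared `L²` norm of a vector-valued function on `ℝ`. -/
def sqL2 {ι : Type*} [Fintype ι] (f : ℝ → ι → ℝ) : ℝ := ∫ x, ∑ i, (f x i) ^ 2

/-- Squared `H¹` norm. -/
def sqH1 {ι : Type*} [Fintype ι] (f : ℝ → ι → ℝ) : ℝ := sqL2 f + sqL2 (deriv f)

/-- Squared weighted `L²` norm `‖|x|^μ f‖²_{L²}`. -/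
def wSqL2 {ι : Type*} [Fintype ι] (μ : ℝ) (f : ℝ → ι → ℝ) : ℝ :=
  ∫ x, |x| ^ (2 * μ) * ∑ i, (f x i) ^ 2

/-- The dissipated component `U₂(t)`. -/
def U2part {n₁ n₂ : ℕ} (U : ℝ → ℝ → Idx n₁ n₂ → ℝ) (t : ℝ) : ℝ → Fin n₂ → ℝ :=
  fun x j => U t x (Sum.inr j)

/-- The primitive `W(x,t) = ∫_{−∞}^x U₁(y,t) dy` (case `n₁ = n₂ = m`). -/
def Wprim {m : ℕ} (U : ℝ → ℝ → Idx m m → ℝ) (t x : ℝ) : Fin m → ℝ :=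
  ∫ y in Set.Iic x, (fun i => U t y (Sum.inl i))

open Filter Topology

section

variable {E : Type*} [NormedAddCommGroup E]

theorem hasDerivAt_integral_Iic [NormedSpace ℝ E] [CompleteSpace E] {g : ℝ → E}
    (hg : Integrable g) {x : ℝ} (hgx : ContinuousAt g x) : HasDerivAt (fun z => ∫ y in Set.Iic z, g y) (g x) x := by
  have hsplit : (fun z => ∫ y in Set.Iic z, g y) =
      fun z => (∫ y in Set.Iic x, g y) + ∫ y in x..z, g y := by
    funext z
    rw [← intervalIntegral.integral_Iic_sub_Iic hg.integrableOn hg.integrableOn, add_sub_cancel]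
  rw [hsplit]
  exact (intervalIntegral.integral_hasDerivAt_right hg.intervalIntegrable
    hg.aestronglyMeasurable.stronglyMeasurableAtFilter hgx).const_add _

theorem integrable_of_norm_le_mul_inv_one_add_sq {g : ℝ → E} (hg : Continuous g) {C : ℝ}
    (hC : ∀ x, ‖g x‖ ≤ C * (1 + x ^ 2)⁻¹) : Integrable g :=
  (integrable_inv_one_add_sq.const_mul C).mono' hg.aestronglyMeasurable (.of_forall hC)

theorem tendsto_atBot_zero_of_norm_le_mul_inv_one_add_sq {g : ℝ → E} {C : ℝ}
    (hC : ∀ x, ‖g x‖ ≤ C * (1 + x ^ 2)⁻¹) : Tendsto g atBot (𝓝 0) := by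
  refine squeeze_zero_norm hC ?_
  simpa using (tendsto_inv_atTop_zero.comp <| tendsto_atTop_add_const_left _ 1 <|
    (tendsto_pow_atTop two_ne_zero).comp tendsto_neg_atBot_atTop).const_mul C

end

theorem HasDerivAt.precomp {𝕜 F ι κ : Type*} [NontriviallyNormedField 𝕜] [NormedAddCommGroup F]
    [NormedSpace 𝕜 F] [Fintype ι] [Fintype κ] {f : 𝕜 → κ → F} {f' : κ → F} {t : 𝕜} (hf : HasDerivAt f f' t) (σ : ι → κ) :
    HasDerivAt (fun s => f s ∘ σ) (f' ∘ σ) t :=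
  hasDerivAt_pi.2 fun i => hasDerivAt_pi.1 hf (σ i)

theorem HasDerivAt.const_mulVec {ι κ : Type*} [Fintype ι] [Fintype κ] [DecidableEq κ]
    (M : Matrix ι κ ℝ) {f : ℝ → κ → ℝ} {f' : κ → ℝ} {t : ℝ} (hf : HasDerivAt f f' t) :
    HasDerivAt (fun s => M *ᵥ f s) (M *ᵥ f') t :=
  M.mulVecLin.toContinuousLinearMap.hasFDerivAt.comp_hasDerivAt t hf

namespace Matrix

variable {l m α : Type*} [Fintype l] [Fintype m] [NonUnitalNonAssocSemiring α]

theorem mulVec_comp_inl (A : Matrix (l ⊕ m) (l ⊕ m) α) (v : l ⊕ m → α) :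
    (A *ᵥ v) ∘ Sum.inl = A.toBlocks₁₁ *ᵥ (v ∘ Sum.inl) + A.toBlocks₁₂ *ᵥ (v ∘ Sum.inr) := by
  conv_lhs => rw [← fromBlocks_toBlocks A, fromBlocks_mulVec]
  rfl

theorem mulVec_comp_inr (A : Matrix (l ⊕ m) (l ⊕ m) α) (v : l ⊕ m → α) :
    (A *ᵥ v) ∘ Sum.inr = A.toBlocks₂₁ *ᵥ (v ∘ Sum.inl) + A.toBlocks₂₂ *ᵥ (v ∘ Sum.inr) := by
  conv_lhs => rw [← fromBlocks_toBlocks A, fromBlocks_mulVec]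
  rfl

end Matrix

theorem Bmat_mulVec_comp_inl {n₁ n₂ : ℕ} (D : Matrix (Fin n₂) (Fin n₂) ℝ) (v : Idx n₁ n₂ → ℝ) :
    (Bmat D *ᵥ v) ∘ Sum.inl = 0 := by
  simp [Bmat, fromBlocks_mulVec]

theorem Bmat_mulVec_comp_inr {n₁ n₂ : ℕ} (D : Matrix (Fin n₂) (Fin n₂) ℝ) (v : Idx n₁ n₂ → ℝ) :
    (Bmat D *ᵥ v) ∘ Sum.inr = D *ᵥ (v ∘ Sum.inr) := by
  simp [Bmat, fromBlocks_mulVec]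

namespace IsClassicalSolution

variable {n₁ n₂ : ℕ} {A : Matrix (Idx n₁ n₂) (Idx n₁ n₂) ℝ} {D : Matrix (Fin n₂) (Fin n₂) ℝ}
  {U : ℝ → ℝ → Idx n₁ n₂ → ℝ}

theorem contDiff_space (hU : IsClassicalSolution A D U) (t : ℝ) : ContDiff ℝ (⊤ : ℕ∞) (U t) :=
  hU.smooth.comp (contDiff_const.prodMk contDiff_id)

theorem contDiff_time (hU : IsClassicalSolution A D U) (x : ℝ) :
    ContDiff ℝ (⊤ : ℕ∞) (fun s => U s x) :=
  hU.smooth.comp (contDiff_id.prodMk contDiff_const)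

theorem hasDerivAt_space (hU : IsClassicalSolution A D U) (t x : ℝ) :
    HasDerivAt (U t) (pdx U t x) x :=
  ((hU.contDiff_space t).differentiable (by simp) x).hasDerivAt

theorem continuous_pdx (hU : IsClassicalSolution A D U) (t : ℝ) : Continuous (pdx U t) :=
  (hU.contDiff_space t).continuous_deriv (by simp)

theorem hasDerivAt_time (hU : IsClassicalSolution A D U) {t : ℝ} (ht : 0 ≤ t) (x : ℝ) :
    HasDerivAt (fun s => U s x) (-(A *ᵥ pdx U t x + Bmat D *ᵥ U t x)) t := by
  have h := hU.eqn t x ht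
  rw [add_assoc] at h
  rw [← eq_neg_of_add_eq_zero_left h]
  exact ((hU.contDiff_time x).differentiable (by simp) t).hasDerivAt

theorem hasDerivAt_time_fst (hU : IsClassicalSolution A D U) (hA₁₁ : A.toBlocks₁₁ = 0) {t : ℝ}
    (ht : 0 ≤ t) (x : ℝ) :
    HasDerivAt (fun s => U s x ∘ Sum.inl) (-(A.toBlocks₁₂ *ᵥ (pdx U t x ∘ Sum.inr))) t := by
  refine ((hU.hasDerivAt_time ht x).precomp Sum.inl).congr_deriv ?_
  rw [Pi.neg_comp, Pi.add_comp, A.mulVec_comp_inl, Bmat_mulVec_comp_inl, hA₁₁]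
  simp

theorem hasDerivAt_time_snd (hU : IsClassicalSolution A D U) {t : ℝ} (ht : 0 ≤ t) (x : ℝ) :
    HasDerivAt (fun s => U s x ∘ Sum.inr)
      (-(A.toBlocks₂₁ *ᵥ (pdx U t x ∘ Sum.inl) + A.toBlocks₂₂ *ᵥ (pdx U t x ∘ Sum.inr)
        + D *ᵥ (U t x ∘ Sum.inr))) t := by
  refine ((hU.hasDerivAt_time ht x).precomp Sum.inr).congr_deriv ?_
  rw [Pi.neg_comp, Pi.add_comp, A.mulVec_comp_inr, Bmat_mulVec_comp_inr]

theorem norm_iteratedDeriv_le (hU : IsClassicalSolution A D U) (j : ℕ) (T : ℝ) :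
    ∃ C, ∀ t ∈ Set.Icc 0 T, ∀ x,
      ‖iteratedDeriv j (U t) x‖ ≤ C * (1 + x ^ 2)⁻¹ := by
  obtain ⟨C₀, hC₀⟩ := hU.decay 0 j T
  obtain ⟨C₂, hC₂⟩ := hU.decay 2 j T
  refine ⟨C₀ + C₂, fun t ht x => ?_⟩
  have h₀ := hC₀ t ht x
  have h₂ := hC₂ t ht x
  rw [pow_zero, one_mul] at h₀
  rw [sq_abs] at h₂
  rw [← div_eq_mul_inv, le_div_iff₀ (by positivity)]
  linarith

theorem norm_le (hU : IsClassicalSolution A D U) (T : ℝ) :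
    ∃ C, ∀ t ∈ Set.Icc 0 T, ∀ x, ‖U t x‖ ≤ C * (1 + x ^ 2)⁻¹ := by
  simpa using hU.norm_iteratedDeriv_le 0 T

theorem norm_pdx_le (hU : IsClassicalSolution A D U) (T : ℝ) :
    ∃ C, ∀ t ∈ Set.Icc 0 T, ∀ x, ‖pdx U t x‖ ≤ C * (1 + x ^ 2)⁻¹ := by
  simpa [iteratedDeriv_one, pdx] using hU.norm_iteratedDeriv_le 1 T

theorem integrable (hU : IsClassicalSolution A D U) {t : ℝ} (ht : 0 ≤ t) : Integrable (U t) := by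
  obtain ⟨C, hC⟩ := hU.norm_le t
  exact integrable_of_norm_le_mul_inv_one_add_sq (hU.contDiff_space t).continuous
    (hC t ⟨ht, le_rfl⟩)

theorem continuous_fst (hU : IsClassicalSolution A D U) (t : ℝ) :
    Continuous fun y => U t y ∘ Sum.inl :=
  (Pi.continuous_precomp Sum.inl).comp (hU.contDiff_space t).continuous

theorem integrable_fst (hU : IsClassicalSolution A D U) {t : ℝ} (ht : 0 ≤ t) :
    Integrable fun y => U t y ∘ Sum.inl :=
  (LinearMap.funLeft ℝ ℝ Sum.inl).toContinuousLinearMap.integrable_comp (hU.integrable ht)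

theorem integrable_pdx (hU : IsClassicalSolution A D U) {t : ℝ} (ht : 0 ≤ t) :
    Integrable (pdx U t) := by
  obtain ⟨C, hC⟩ := hU.norm_pdx_le t
  exact integrable_of_norm_le_mul_inv_one_add_sq (hU.continuous_pdx t) (hC t ⟨ht, le_rfl⟩)

theorem integral_Iic_pdx (hU : IsClassicalSolution A D U) {t : ℝ} (ht : 0 ≤ t) (x : ℝ) :
    ∫ y in Set.Iic x, pdx U t y = U t x := by
  obtain ⟨C, hC⟩ := hU.norm_le t
  rw [integral_Iic_of_hasDerivAt_of_tendsto' (fun y _ => hU.hasDerivAt_space t y)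
    (hU.integrable_pdx ht).integrableOn
    (tendsto_atBot_zero_of_norm_le_mul_inv_one_add_sq (hC t ⟨ht, le_rfl⟩)), sub_zero]

section Wprim

variable {m : ℕ} {A : Matrix (Idx m m) (Idx m m) ℝ} {D : Matrix (Fin m) (Fin m) ℝ}
  {U : ℝ → ℝ → Idx m m → ℝ}

theorem hasDerivAt_Wprim_space (hU : IsClassicalSolution A D U) {t : ℝ} (ht : 0 ≤ t) (x : ℝ) :
    HasDerivAt (Wprim U t) (U t x ∘ Sum.inl) x :=
  hasDerivAt_integral_Iic (hU.integrable_fst ht) (hU.continuous_fst t).continuousAt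

theorem hasDerivAt_Wprim_time (hU : IsClassicalSolution A D U) (hA₁₁ : A.toBlocks₁₁ = 0) {t : ℝ}
    (ht : 0 < t) (x : ℝ) :
    HasDerivAt (fun s => Wprim U s x) (-(A.toBlocks₁₂ *ᵥ (U t x ∘ Sum.inr))) t := by
  let L : (Idx m m → ℝ) →L[ℝ] (Fin m → ℝ) :=
    (A.toBlocks₁₂.mulVecLin ∘ₗ LinearMap.funLeft ℝ ℝ Sum.inr).toContinuousLinearMap
  obtain ⟨C, hC⟩ := hU.norm_pdx_le (2 * t)
  have hball : ∀ s ∈ Metric.ball t t, s ∈ Set.Icc 0 (2 * t) := by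
    intro s hs
    rw [Metric.mem_ball, Real.dist_eq, abs_sub_lt_iff] at hs
    constructor <;> linarith
  have key := hasDerivAt_integral_of_dominated_loc_of_deriv_le (μ := volume.restrict (Set.Iic x))
    (F := fun s y => U s y ∘ Sum.inl) (F' := fun s y => -L (pdx U s y))
    (bound := fun y => ‖L‖ * (C * (1 + y ^ 2)⁻¹)) (Metric.ball_mem_nhds t ht)
    (.of_forall fun s => (hU.continuous_fst s).aestronglyMeasurable)
    (hU.integrable_fst ht.le).restrict
    (L.continuous.comp (hU.continuous_pdx t)).neg.aestronglyMeasurable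
    (.of_forall fun y s hs => (norm_neg (L (pdx U s y))).trans_le <|
      (L.le_opNorm _).trans (mul_le_mul_of_nonneg_left (hC s (hball s hs) y) (norm_nonneg L)))
    (integrable_inv_one_add_sq.const_mul C |>.const_mul ‖L‖).restrict
    (.of_forall fun y s hs => hU.hasDerivAt_time_fst hA₁₁ (hball s hs).1 y)
  have hvalue : ∫ y in Set.Iic x, -L (pdx U t y) = -(A.toBlocks₁₂ *ᵥ (U t x ∘ Sum.inr)) := by
    rw [integral_neg, L.integral_comp_comm (hU.integrable_pdx ht.le).integrableOn,
      hU.integral_Iic_pdx ht.le]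
    rfl
  exact hvalue ▸ key.2

theorem deriv_deriv_Wprim_space (hU : IsClassicalSolution A D U) {t : ℝ} (ht : 0 ≤ t) (x : ℝ) :
    deriv (fun y => deriv (fun y' => Wprim U t y') y) x = pdx U t x ∘ Sum.inl := by
  have hWx : (fun y => deriv (fun y' => Wprim U t y') y) = fun y => U t y ∘ Sum.inl :=
    funext fun y => (hU.hasDerivAt_Wprim_space ht y).deriv
  rw [hWx]
  exact ((hU.hasDerivAt_space t x).precomp Sum.inl).deriv

theorem deriv_time_deriv_Wprim_space (hU : IsClassicalSolution A D U) (hA₁₁ : A.toBlocks₁₁ = 0)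
    {t : ℝ} (ht : 0 < t) (x : ℝ) :
    deriv (fun s => deriv (fun y => Wprim U s y) x) t
      = -(A.toBlocks₁₂ *ᵥ (pdx U t x ∘ Sum.inr)) := by
  have hWx : (fun s => deriv (fun y => Wprim U s y) x) =ᶠ[𝓝 t] fun s => U s x ∘ Sum.inl :=
    eventually_of_mem (Ioi_mem_nhds ht) fun s hs => (hU.hasDerivAt_Wprim_space hs.le x).deriv
  rw [hWx.deriv_eq]
  exact (hU.hasDerivAt_time_fst hA₁₁ ht.le x).deriv

theorem deriv_time_deriv_Wprim_time (hU : IsClassicalSolution A D U) (hA₁₁ : A.toBlocks₁₁ = 0)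
    {t : ℝ} (ht : 0 < t) (x : ℝ) :
    deriv (fun s => deriv (fun s' => Wprim U s' x) s) t
      = -(A.toBlocks₁₂ *ᵥ -(A.toBlocks₂₁ *ᵥ (pdx U t x ∘ Sum.inl)
          + A.toBlocks₂₂ *ᵥ (pdx U t x ∘ Sum.inr) + D *ᵥ (U t x ∘ Sum.inr))) := by
  have hWt : (fun s => deriv (fun s' => Wprim U s' x) s) =ᶠ[𝓝 t]
      fun s => -(A.toBlocks₁₂ *ᵥ (U s x ∘ Sum.inr)) :=
    eventually_of_mem (Ioi_mem_nhds ht) fun s hs => (hU.hasDerivAt_Wprim_time hA₁₁ hs x).deriv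
  rw [hWt.deriv_eq]
  exact ((hU.hasDerivAt_time_snd ht.le x).const_mulVec _).neg.deriv

end Wprim

end IsClassicalSolution

theorem Matrix.conj_mulVec_mulVec {n K : Type*} [Fintype n] [DecidableEq n] [Field K]
    {P : Matrix n n K} (hP : IsUnit P) (M : Matrix n n K) (v : n → K) :
    (P * M * P⁻¹) *ᵥ (P *ᵥ v) = P *ᵥ (M *ᵥ v) := by
  rw [mulVec_mulVec, nonsing_inv_mul_cancel_right _ _ ((isUnit_iff_isUnit_det P).mp hP),
    ← mulVec_mulVec]

theorem damped_wave_reformulation_general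
    {m : ℕ}
    (A : Matrix (Idx m m) (Idx m m) ℝ)
    (hA11 : A.toBlocks₁₁ = 0) (hA12 : IsUnit A.toBlocks₁₂)
    (D : Matrix (Fin m) (Fin m) ℝ)
    (U : ℝ → ℝ → Idx m m → ℝ) (hU : IsClassicalSolution A D U) :
    (∀ (t x : ℝ), 0 ≤ t →
        HasDerivAt (fun z => Wprim U t z) (fun i => U t x (Sum.inl i)) x) ∧
    (∀ (t x : ℝ), 0 < t →
        HasDerivAt (fun s => Wprim U s x)
          (-(A.toBlocks₁₂.mulVec (fun j => U t x (Sum.inr j)))) t) ∧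
    (∀ (t x : ℝ), 0 < t →
        deriv (fun s => deriv (fun s' => Wprim U s' x) s) t
          - (A.toBlocks₁₂ * A.toBlocks₂₁).mulVec
              (deriv (fun y => deriv (fun y' => Wprim U t y') y) x)
          + (A.toBlocks₁₂ * A.toBlocks₂₂ * (A.toBlocks₁₂)⁻¹).mulVec
              (deriv (fun s => deriv (fun y => Wprim U s y) x) t)
          + (A.toBlocks₁₂ * D * (A.toBlocks₁₂)⁻¹).mulVec
              (deriv (fun s => Wprim U s x) t)
          = 0) := by
  refine ⟨fun t x ht => hU.hasDerivAt_Wprim_space ht x,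
    fun t x ht => hU.hasDerivAt_Wprim_time hA11 ht x, fun t x ht => ?_⟩
  rw [hU.deriv_time_deriv_Wprim_time hA11 ht, hU.deriv_deriv_Wprim_space ht.le,
    hU.deriv_time_deriv_Wprim_space hA11 ht, (hU.hasDerivAt_Wprim_time hA11 ht x).deriv]
  simp only [mulVec_neg, conj_mulVec_mulVec hA12]
  simp only [mulVec_add, mulVec_mulVec, neg_neg]
  abel

/-- Damped wave reformulation: if `n₁ = n₂ = m`, `A₁,₁ = 0` and
`A₁,₂` is invertible, then `W(x,t) = ∫_{−∞}^x U₁(y,t) dy` satisfies `∂ₓW = U₁`,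
`∂ₜW = −A₁,₂U₂`, and the extended damped wave equation
`∂ₜₜW − A₁,₂A₂,₁∂ₓₓW + A₁,₂A₂,₂A₁,₂⁻¹ ∂ₜ∂ₓW + A₁,₂DA₁,₂⁻¹ ∂ₜW = 0`. -/
theorem damped_wave_reformulation
    {m : ℕ} (hm : 1 ≤ m)
    (A : Matrix (Idx m m) (Idx m m) ℝ) (hA : A.IsSymm)
    (hA11 : A.toBlocks₁₁ = 0) (hA12 : IsUnit A.toBlocks₁₂)
    (D : Matrix (Fin m) (Fin m) ℝ) (hD : D.IsSymm) (hDpos : D.PosDef)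
    (κ : ℝ) (hκ : 0 < κ)
    (hdiss : ∀ X : Fin m → ℝ, κ * ∑ j, (X j) ^ 2 ≤ ∑ j, D.mulVec X j * X j)
    (U : ℝ → ℝ → Idx m m → ℝ) (hU : IsClassicalSolution A D U) :
    (∀ (t x : ℝ), 0 ≤ t →
        HasDerivAt (fun z => Wprim U t z) (fun i => U t x (Sum.inl i)) x) ∧
    (∀ (t x : ℝ), 0 < t →
        HasDerivAt (fun s => Wprim U s x)
          (-(A.toBlocks₁₂.mulVec (fun j => U t x (Sum.inr j)))) t) ∧
    (∀ (t x : ℝ), 0 < t →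
        deriv (fun s => deriv (fun s' => Wprim U s' x) s) t
          - (A.toBlocks₁₂ * A.toBlocks₂₁).mulVec
              (deriv (fun y => deriv (fun y' => Wprim U t y') y) x)
          + (A.toBlocks₁₂ * A.toBlocks₂₂ * (A.toBlocks₁₂)⁻¹).mulVec
              (deriv (fun s => deriv (fun y => Wprim U s y) x) t)
          + (A.toBlocks₁₂ * D * (A.toBlocks₁₂)⁻¹).mulVec
              (deriv (fun s => Wprim U s x) t)
          = 0) :=
  damped_wave_reformulation_general A hA11 hA12 D U hU
end
end

section
/- Polynomial decay from a weighted differential inequality (Lemma B.2): Let T > 0 and let E₁, E₂ : [0,T) → ℝ be nonnegative continuous functions, differentiable on (0,T), such that for all t ∈ (0,T): (d/dt)(E₁(t) + η₀ t E₂(t)) + a₁ E₁(t)^{1+1/μ} + a₂ E₂(t) ≤ 0, where a₁, a₂, μ > 0 and 0 < η₀ < min{a₂/μ, a₂}. Then there exists a constant C > 0, depending only on μ, η₀ and a₂ (in particular independent of T and a₁), such that E₁(t) + η₀ t E₂(t) ≤ C a₁^{−μ} t^{−μ} for all t ∈ (0,T). -/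
/-!
Compare `F t = E₁ t + η₀ t E₂ t` with the barrier `b t = K a₁^(-μ) t^(-μ)`. Since `F` is bounded
near `0` and `b` blows up there, `F s ≤ b s` for some small `s > 0`. At a point where `F`
touches `b`, either `E₁ ≥ θ b`, and then `a₁ E₁^(1+1/μ) ≥ θ^(1+1/μ) K^(1/μ) b / t`, or
`η₀ t E₂ ≥ (1 - θ) b`, and then `a₂ E₂ ≥ a₂ (1 - θ) b / (η₀ t)`. For `θ` small enough that
`μ η₀ < (1 - θ) a₂` and `K` large, both exceed `μ b / t = -b'`, so `F' < b'` at every contact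
point and the fencing theorem keeps `F` below `b`.
-/

open Set Filter Real Topology

noncomputable def barrier (K a μ x : ℝ) : ℝ := K * a ^ (-μ) * x ^ (-μ)

section Barrier

variable {K a μ : ℝ}

theorem barrier_pos (hK : 0 < K) (ha : 0 < a) {x : ℝ} (hx : 0 < x) : 0 < barrier K a μ x := by
  unfold barrier; positivity

theorem hasDerivAt_barrier {x : ℝ} (hx : 0 < x) :
    HasDerivAt (barrier K a μ) (-(μ * barrier K a μ x / x)) x := by
  refine ((hasDerivAt_rpow_const (Or.inl hx.ne')).const_mul (K * a ^ (-μ))).congr_deriv ?_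
  rw [barrier, rpow_sub_one hx.ne']
  ring

theorem tendsto_barrier_nhdsGT_zero (hK : 0 < K) (ha : 0 < a) (hμ : 0 < μ) :
    Tendsto (barrier K a μ) (𝓝[>] 0) atTop :=
  (tendsto_rpow_neg_nhdsGT_zero (neg_neg_of_pos hμ)).const_mul_atTop (by positivity)

theorem mul_barrier_rpow_one_add_inv (hK : 0 < K) (ha : 0 < a) (hμ : μ ≠ 0) {x : ℝ}
    (hx : 0 < x) :
    a * barrier K a μ x ^ (1 + 1 / μ) = K ^ (1 / μ) * barrier K a μ x / x := by
  have hroot : barrier K a μ x ^ (1 / μ) = K ^ (1 / μ) / (a * x) := by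
    rw [barrier, mul_rpow (by positivity) (by positivity), mul_rpow hK.le (by positivity),
      ← rpow_mul ha.le, ← rpow_mul hx.le, neg_mul, mul_one_div_cancel hμ, rpow_neg_one,
      rpow_neg_one]
    field_simp
  rw [rpow_add (barrier_pos hK ha hx), rpow_one, hroot]
  field_simp

theorem mul_barrier_div_lt_of_barrier_le {η a₂ θ x e₁ e₂ : ℝ} (hK : 0 < K) (ha : 0 < a)
    (hμ : 0 < μ) (hx : 0 < x) (hη : 0 < η) (ha₂ : 0 ≤ a₂) (hθ : 0 ≤ θ)
    (hKθ : μ < θ ^ (1 + 1 / μ) * K ^ (1 / μ)) (hθa₂ : μ * η < (1 - θ) * a₂)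
    (he₁ : 0 ≤ e₁) (he₂ : 0 ≤ e₂) (hle : barrier K a μ x ≤ e₁ + η * x * e₂) :
    μ * barrier K a μ x / x < a * e₁ ^ (1 + 1 / μ) + a₂ * e₂ := by
  set b := barrier K a μ x
  have hb : 0 < b := barrier_pos hK ha hx
  rcases le_or_gt (θ * b) e₁ with h | h
  · have hlt : μ * b / x < a * (θ * b) ^ (1 + 1 / μ) := by
      rw [mul_rpow hθ hb.le, mul_left_comm, mul_barrier_rpow_one_add_inv hK ha hμ.ne' hx,
        ← mul_div_assoc, ← mul_assoc]
      gcongr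
    have hle' : a * (θ * b) ^ (1 + 1 / μ) ≤ a * e₁ ^ (1 + 1 / μ) := by gcongr
    have : 0 ≤ a₂ * e₂ := mul_nonneg ha₂ he₂
    linarith
  · have hη_mul : η * (μ * b / x) < η * (a₂ * e₂) := by
      calc η * (μ * b / x) = μ * η * b / x := by ring
        _ < (1 - θ) * a₂ * b / x := by gcongr
        _ = a₂ * ((1 - θ) * b) / x := by ring
        _ ≤ a₂ * (η * x * e₂) / x := by gcongr a₂ * ?_ / x; linarith
        _ = η * (a₂ * e₂) := by field_simp
    have : 0 ≤ a * e₁ ^ (1 + 1 / μ) := mul_nonneg ha.le (rpow_nonneg he₁ _)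
    linarith [lt_of_mul_lt_mul_left hη_mul hη.le]

end Barrier

theorem exists_barrier_constants {μ η a₂ : ℝ} (hμ : 0 < μ) (ha₂ : 0 < a₂) (hμη : μ * η < a₂) :
    ∃ θ K : ℝ, 0 ≤ θ ∧ 0 < K ∧ μ < θ ^ (1 + 1 / μ) * K ^ (1 / μ) ∧
      μ * η < (1 - θ) * a₂ := by
  set θ := (a₂ - μ * η) / (2 * a₂) with hθ_def
  have hθ : 0 < θ := div_pos (by linarith) (by positivity)
  refine ⟨θ, (2 * μ / θ ^ (1 + 1 / μ)) ^ μ, hθ.le, by positivity, ?_, ?_⟩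
  · rw [← rpow_mul (by positivity), mul_one_div_cancel hμ.ne', rpow_one,
      mul_div_cancel₀ _ (by positivity)]
    linarith
  · have : (1 - θ) * a₂ = (a₂ + μ * η) / 2 := by rw [hθ_def]; field_simp; ring
    linarith

theorem exists_mem_Ioo_le_of_tendsto_atTop {F φ : ℝ → ℝ} {a b l : ℝ} (hab : a < b)
    (hF : Tendsto F (𝓝[>] a) (𝓝 l)) (hφ : Tendsto φ (𝓝[>] a) atTop) :
    ∃ s ∈ Ioo a b, F s ≤ φ s := by
  have hnear : ∀ᶠ x in 𝓝[>] a, x ∈ Ioo a b ∧ F x ≤ φ x := by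
    filter_upwards [Ioo_mem_nhdsGT hab, hF.eventually_lt_const (lt_add_one l),
      hφ.eventually_ge_atTop (l + 1)] with x hx hFx hφx using ⟨hx, hFx.le.trans hφx⟩
  exact hnear.exists

/-- **Lemma B.2.** Polynomial decay from a weighted differential
inequality: if nonnegative continuous `E₁, E₂` on `[0,T)`, differentiable on `(0,T)`,
satisfy `(d/dt)(E₁ + η₀ t E₂) + a₁E₁^{1+1/μ} + a₂E₂ ≤ 0` with `a₁, a₂, μ > 0` and
`0 < η₀ < min{a₂/μ, a₂}`, then `E₁(t) + η₀ t E₂(t) ≤ C a₁^{−μ} t^{−μ}` on `(0,T)`,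
with `C` depending only on `μ, η₀, a₂`. -/
theorem polynomial_decay_from_differential_inequality
    (μ η₀ a₂ : ℝ) (hμ : 0 < μ) (ha₂ : 0 < a₂)
    (hη₀ : 0 < η₀) (hη₀' : η₀ < min (a₂ / μ) a₂) :
    ∃ C : ℝ, 0 < C ∧
      ∀ (T a₁ : ℝ), 0 < T → 0 < a₁ →
      ∀ E₁ E₂ : ℝ → ℝ,
        ContinuousOn E₁ (Set.Ico 0 T) → ContinuousOn E₂ (Set.Ico 0 T) →
        (∀ t ∈ Set.Ico (0 : ℝ) T, 0 ≤ E₁ t) →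
        (∀ t ∈ Set.Ico (0 : ℝ) T, 0 ≤ E₂ t) →
        (∀ t ∈ Set.Ioo (0 : ℝ) T, DifferentiableAt ℝ E₁ t) →
        (∀ t ∈ Set.Ioo (0 : ℝ) T, DifferentiableAt ℝ E₂ t) →
        (∀ t ∈ Set.Ioo (0 : ℝ) T,
          deriv (fun s => E₁ s + η₀ * s * E₂ s) t +
              a₁ * E₁ t ^ (1 + 1 / μ) + a₂ * E₂ t ≤ 0) →
        ∀ t ∈ Set.Ioo (0 : ℝ) T,
          E₁ t + η₀ * t * E₂ t ≤ C * a₁ ^ (-μ) * t ^ (-μ) := by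
  have hμη₀ : μ * η₀ < a₂ := by
    linarith [(lt_div_iff₀ hμ).mp (lt_min_iff.mp hη₀').1]
  obtain ⟨θ, K, hθ, hK, hKθ, hθa₂⟩ := exists_barrier_constants hμ ha₂ hμη₀
  refine ⟨K, hK, fun T a₁ hT ha₁ E₁ E₂ hc₁ hc₂ hE₁ hE₂ hd₁ hd₂ hineq t ht => ?_⟩
  set F := fun s => E₁ s + η₀ * s * E₂ s
  have hFc : ContinuousOn F (Ico 0 T) :=
    hc₁.add ((continuousOn_const.mul continuousOn_id).mul hc₂)
  have hFd : ∀ x ∈ Ioo 0 T, HasDerivAt F (deriv F x) x := fun x hx =>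
    ((hd₁ x hx).add ((differentiableAt_fun_id.const_mul η₀).mul (hd₂ x hx))).hasDerivAt
  obtain ⟨s, hs, hFs⟩ := exists_mem_Ioo_le_of_tendsto_atTop ht.1
    ((hFc.continuousWithinAt ⟨le_rfl, hT⟩).mono_of_mem_nhdsWithin (Ico_mem_nhdsGT hT)).tendsto
    (tendsto_barrier_nhdsGT_zero hK ha₁ hμ)
  have hsub : Icc s t ⊆ Ioo 0 T := Icc_subset_Ioo hs.1 ht.2
  have hsub' : Ico s t ⊆ Ioo 0 T := Ico_subset_Icc_self.trans hsub
  refine image_le_of_deriv_right_lt_deriv_boundary' (hFc.mono (hsub.trans Ioo_subset_Ico_self))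
    (fun x hx => (hFd x (hsub' hx)).hasDerivWithinAt) hFs
    (fun x hx => (hasDerivAt_barrier (hsub hx).1).continuousAt.continuousWithinAt)
    (fun x hx => (hasDerivAt_barrier (hsub' hx).1).hasDerivWithinAt) ?_ ⟨hs.2.le, le_rfl⟩
  intro x hx hFx
  obtain ⟨hx₀, hxT⟩ := hsub' hx
  have hdecay := mul_barrier_div_lt_of_barrier_le hK ha₁ hμ hx₀ hη₀ ha₂.le hθ hKθ hθa₂
    (hE₁ x ⟨hx₀.le, hxT⟩) (hE₂ x ⟨hx₀.le, hxT⟩) hFx.ge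
  have hdiss := hineq x ⟨hx₀, hxT⟩
  linarith
end
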